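/- arXiv:1202.3570 — 5 statements merged into one kernel-verified Lean document; each statement's English description precedes it below -/
import Mathlib

section
/- Consider two independent normal populations with means μ_0 ≤ μ_1 and common variance σ² > 0, where for each s the sample from population 0 has fixed size n_0 = m and the sample from population 1 has size n_1^{(s)} = m′s (m, m′ ≥ 1 fixed integers). Then as s → ∞ the constrained MLE of the variance converges almost surely to the true variance: σ̂²_{(s)} → σ² a.s. -/
open MeasureTheory ProbabilityTheory Filter Finset BoundedContinuousFunction
open scoped NNReal Topology

noncomputable section


/-- The sample mean of the first `n` observations of the sequence `x`. -/
def sampleMean (x : ℕ → ℝ) (n : ℕ) : ℝ := (∑ j ∈ Finset.range n, x j) / n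

/-- Tree-order MLE of `μ₀` in the two-population case: control sample size `m`,
treatment sample size `ms`; here `xb0`, `xb1` are the two sample means.
`μ̂₀ = min (X̄₀, (m X̄₀ + ms X̄₁)/(m + ms))`. -/
def twoMLE0 (m ms : ℕ) (xb0 xb1 : ℝ) : ℝ :=
  min xb0 (((m : ℝ) * xb0 + (ms : ℝ) * xb1) / ((m + ms : ℕ) : ℝ))

/-- Tree-order MLE of `μ₁` in the two-population case: `μ̂₁ = max (μ̂₀, X̄₁)`. -/
def twoMLE1 (m ms : ℕ) (xb0 xb1 : ℝ) : ℝ := max (twoMLE0 m ms xb0 xb1) xb1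

/-- Tree-order MLE of the common variance `σ²` in the two-population case, based on the
first `m` observations of `X0` and the first `ms` observations of `X1`. -/
def twoSigmaHat (m ms : ℕ) (X0 X1 : ℕ → ℝ) : ℝ :=
  (∑ j ∈ Finset.range m, (X0 j - twoMLE0 m ms (sampleMean X0 m) (sampleMean X1 ms)) ^ 2
   + ∑ j ∈ Finset.range ms, (X1 j - twoMLE1 m ms (sampleMean X0 m) (sampleMean X1 ms)) ^ 2)
   / ((m + ms : ℕ) : ℝ)

/-! By the strong law of large numbers, almost surely the sample mean of the `X1 j` tends to
`μ1` and the sample mean of the `(X1 j - μ1) ^ 2` tends to `σ²`. Along such a path the pooled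
mean, and with it `μ̂₁ = max (min (X̄₀, pooled mean), X̄₁)`, tends to `μ1`, whatever the fixed
control sample is. The `m` control terms then contribute `O(1 / s)` to `σ̂²`, and
`∑ (X1 j - μ̂₁) ^ 2 / n` differs from the sample mean of the `(X1 j - μ1) ^ 2` by
`(μ1 - μ̂₁) (2 X̄₁ - μ̂₁ - μ1) → 0`. -/

section Deterministic

variable {α : Type*} {l : Filter α} {n : α → ℕ}

lemma tendsto_inv_natCast_add (m : ℕ) (hn : Tendsto n l atTop) :
    Tendsto (fun s => (((m + n s : ℕ) : ℝ))⁻¹) l (𝓝 0) :=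
  tendsto_inv_atTop_zero.comp <| tendsto_natCast_atTop_atTop.comp <|
    tendsto_atTop_mono (fun _ => Nat.le_add_left _ _) hn

lemma tendsto_natCast_div_natCast_add (m : ℕ) (hn : Tendsto n l atTop) :
    Tendsto (fun s => (n s : ℝ) / ((m + n s : ℕ) : ℝ)) l (𝓝 1) := by
  refine ((tendsto_natCast_div_add_atTop (m : ℝ)).comp hn).congr fun s => ?_
  simp [add_comm]

lemma tendsto_twoMLE0 (m : ℕ) (a : ℝ) {μ : ℝ} {b : α → ℝ} (hn : Tendsto n l atTop)
    (hb : Tendsto b l (𝓝 μ)) :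
    Tendsto (fun s => twoMLE0 m (n s) a (b s)) l (𝓝 (min a μ)) := by
  have hweighted :
      Tendsto (fun s => ((m : ℝ) * a + n s * b s) / ((m + n s : ℕ) : ℝ)) l (𝓝 μ) := by
    have := ((tendsto_inv_natCast_add m hn).const_mul ((m : ℝ) * a)).add
      ((tendsto_natCast_div_natCast_add m hn).mul hb)
    rw [mul_zero, zero_add, one_mul] at this
    refine this.congr fun s => ?_
    ring
  exact tendsto_const_nhds.min hweighted

lemma tendsto_twoMLE1 (m : ℕ) (a : ℝ) {μ : ℝ} {b : α → ℝ} (hn : Tendsto n l atTop)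
    (hb : Tendsto b l (𝓝 μ)) :
    Tendsto (fun s => twoMLE1 m (n s) a (b s)) l (𝓝 μ) := by
  simpa only [twoMLE1, max_eq_right (min_le_right a μ)] using (tendsto_twoMLE0 m a hn hb).max hb

lemma sum_sq_sub_eq (x : ℕ → ℝ) (k : ℕ) (t μ : ℝ) :
    ∑ j ∈ range k, (x j - t) ^ 2
      = ∑ j ∈ range k, (x j - μ) ^ 2 + (μ - t) * (2 * ∑ j ∈ range k, x j - k * (t + μ)) := by
  induction k with
  | zero => simp
  | succ k ih =>
    rw [sum_range_succ, sum_range_succ (fun j => (x j - μ) ^ 2), sum_range_succ x, ih]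
    push_cast
    ring

lemma tendsto_sampleMean_sq_sub {x : ℕ → ℝ} {μ σ2 : ℝ} {t : α → ℝ} (hn : Tendsto n l atTop)
    (hmean : Tendsto (sampleMean x) atTop (𝓝 μ))
    (hsq : Tendsto (sampleMean fun j => (x j - μ) ^ 2) atTop (𝓝 σ2))
    (ht : Tendsto t l (𝓝 μ)) :
    Tendsto (fun s => sampleMean (fun j => (x j - t s) ^ 2) (n s)) l (𝓝 σ2) := by
  have hlim := (hsq.comp hn).add (((tendsto_const_nhds (x := μ)).sub ht).mul
    (((hmean.comp hn).const_mul 2).sub (ht.add (tendsto_const_nhds (x := μ)))))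
  rw [sub_self, zero_mul, add_zero] at hlim
  refine hlim.congr' ?_
  filter_upwards [hn.eventually_ne_atTop 0] with s hs
  have hs' : (n s : ℝ) ≠ 0 := Nat.cast_ne_zero.mpr hs
  simp only [Function.comp, sampleMean, sum_sq_sub_eq x (n s) (t s) μ]
  field_simp

lemma tendsto_twoSigmaHat (m : ℕ) (X0 : ℕ → ℝ) {X1 : ℕ → ℝ} {μ σ2 : ℝ}
    (hn : Tendsto n l atTop) (hmean : Tendsto (sampleMean X1) atTop (𝓝 μ))
    (hsq : Tendsto (sampleMean fun j => (X1 j - μ) ^ 2) atTop (𝓝 σ2)) :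
    Tendsto (fun s => twoSigmaHat m (n s) X0 X1) l (𝓝 σ2) := by
  have hb : Tendsto (fun s => sampleMean X1 (n s)) l (𝓝 μ) := hmean.comp hn
  have hfixed := tendsto_finsetSum (range m) fun j _ =>
    (tendsto_const_nhds (x := X0 j)).sub (tendsto_twoMLE0 m (sampleMean X0 m) hn hb) |>.pow 2
  have hgrowing :=
    tendsto_sampleMean_sq_sub hn hmean hsq (tendsto_twoMLE1 m (sampleMean X0 m) hn hb)
  have hlim := (hfixed.mul (tendsto_inv_natCast_add m hn)).add
    ((tendsto_natCast_div_natCast_add m hn).mul hgrowing)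
  rw [mul_zero, zero_add, one_mul] at hlim
  refine hlim.congr' ?_
  filter_upwards [hn.eventually_ne_atTop 0] with s hs
  have hs' : (n s : ℝ) ≠ 0 := Nat.cast_ne_zero.mpr hs
  simp only [twoSigmaHat]
  generalize twoMLE0 m (n s) (sampleMean X0 m) (sampleMean X1 (n s)) = t0
  generalize twoMLE1 m (n s) (sampleMean X0 m) (sampleMean X1 (n s)) = t1
  simp only [sampleMean]
  field_simp

end Deterministic

lemma ae_tendsto_sampleMean_and_sq_sub {Ω : Type*} [MeasurableSpace Ω] {P : Measure Ω}
    [IsFiniteMeasure P] {X : ℕ → Ω → ℝ} (hX : MemLp (X 0) 2 P)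
    (hindep : Pairwise (Function.onFun (· ⟂ᵢ[P] ·) X))
    (hident : ∀ i, IdentDistrib (X i) (X 0) P P) :
    ∀ᵐ ω ∂P, Tendsto (sampleMean (X · ω)) atTop (𝓝 P[X 0]) ∧
      Tendsto (sampleMean fun j => (X j ω - P[X 0]) ^ 2) atTop (𝓝 Var[X 0; P]) := by
  have hdev : Measurable fun x : ℝ => (x - P[X 0]) ^ 2 := by fun_prop
  have hvar := strong_law_ae_real (fun j ω => (X j ω - P[X 0]) ^ 2)
    (hX.sub (memLp_const _)).integrable_sq
    (fun i j hij => (hindep hij).comp hdev hdev) (fun i => (hident i).comp hdev)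
  rw [← variance_eq_integral hX.aemeasurable] at hvar
  filter_upwards [strong_law_ae_real X (hX.integrable one_le_two) hindep hident, hvar] with ω h1 h2
  exact ⟨h1, h2⟩

theorem variance_mle_strong_consistency_two_populations_general
    {Ω : Type*} [MeasurableSpace Ω] (P : Measure Ω) [IsProbabilityMeasure P]
    (μ1 : ℝ) (v : ℝ≥0)
    (m m' : ℕ) (hm' : 1 ≤ m')
    (X0 X1 : ℕ → Ω → ℝ)
    (hindep : iIndepFun (Sum.elim X0 X1) P)
    (hdist1 : ∀ j, Measure.map (X1 j) P = gaussianReal μ1 v) :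
    ∀ᵐ ω ∂P,
      Tendsto (fun s : ℕ => twoSigmaHat m (m' * s) (fun j => X0 j ω) (fun j => X1 j ω))
        atTop (𝓝 (v : ℝ)) := by
  have hlaw : ∀ j, HasLaw (X1 j) (gaussianReal μ1 v) P := fun j =>
    ⟨aemeasurable_of_map_neZero (by rw [hdist1 j]; infer_instance), hdist1 j⟩
  have hindep1 : Pairwise (Function.onFun (· ⟂ᵢ[P] ·) X1) := fun i j hij =>
    hindep.indepFun (i := Sum.inr i) (j := Sum.inr j) (by simpa using hij)
  have hident : ∀ j, IdentDistrib (X1 j) (X1 0) P P := fun j =>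
    ⟨(hlaw j).aemeasurable, (hlaw 0).aemeasurable, by rw [hdist1, hdist1]⟩
  have hmemLp : MemLp (X1 0) 2 P :=
    (hdist1 0 ▸ memLp_id_gaussianReal' 2 (by norm_num)).comp_of_map (hlaw 0).aemeasurable
  have hmean : P[X1 0] = μ1 := by rw [(hlaw 0).integral_eq, integral_id_gaussianReal]
  have hvar : Var[X1 0; P] = v := by rw [(hlaw 0).variance_eq, variance_id_gaussianReal]
  have hn : Tendsto (fun s => m' * s) atTop atTop := tendsto_id.const_mul_atTop' hm'
  have hslln := ae_tendsto_sampleMean_and_sq_sub hmemLp hindep1 hident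
  rw [hmean, hvar] at hslln
  filter_upwards [hslln] with ω ⟨hmean_ω, hsq_ω⟩
  exact tendsto_twoSigmaHat m _ hn hmean_ω hsq_ω

/-- Two independent normal populations with tree-ordered means
`μ0 ≤ μ1` and common variance `v > 0`.  At stage `s` the control sample has fixed size `m`
and the treatment sample has size `m' * s`.  Then the constrained MLE of the variance is
strongly consistent: `σ̂²_{(s)} → σ²` almost surely as `s → ∞`. -/
theorem variance_mle_strong_consistency_two_populations
    {Ω : Type*} [MeasurableSpace Ω] (P : Measure Ω) [IsProbabilityMeasure P]
    (μ0 μ1 : ℝ) (hμ : μ0 ≤ μ1) (v : ℝ≥0) (hv : v ≠ 0)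
    (m m' : ℕ) (hm : 1 ≤ m) (hm' : 1 ≤ m')
    (X0 X1 : ℕ → Ω → ℝ)
    (hmeas0 : ∀ j, Measurable (X0 j)) (hmeas1 : ∀ j, Measurable (X1 j))
    (hindep : iIndepFun (Sum.elim X0 X1) P)
    (hdist0 : ∀ j, Measure.map (X0 j) P = gaussianReal μ0 v)
    (hdist1 : ∀ j, Measure.map (X1 j) P = gaussianReal μ1 v) :
    ∀ᵐ ω ∂P,
      Tendsto (fun s : ℕ => twoSigmaHat m (m' * s) (fun j => X0 j ω) (fun j => X1 j ω))
        atTop (𝓝 (v : ℝ)) :=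
  variance_mle_strong_consistency_two_populations_general P μ1 v m m' hm' X0 X1 hindep hdist1
end
end

section
/- Under assumptions A1–A4, if the total sample size N^{(s)} → ∞ as s → ∞, then with probability one 0 ≤ limsup_{s→∞} σ̂²_{(s)} ≤ σ². -/
/-!
The tree-order MLE minimises the weighted residual sum of squares over the cone
`{m | m₀ ≤ mᵢ}`, and the true means lie in that cone, so `σ̂²_(s)` is at most the average of
`(X_ij - μ_i)²` over the observations of stage `s`. These squared deviations are i.i.d. with
mean `σ²`, and the samples are nested, so listing the observations in order of appearance makes
these averages a subsequence of the averages in the strong law of large numbers.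
-/

open MeasureTheory ProbabilityTheory Filter Finset BoundedContinuousFunction
open scoped NNReal Topology

noncomputable section


/-- Vector of sample means: population `0` has sample size `n0`, every other population
has sample size `nn`.  `X i j` is the `j`-th observation from population `i`. -/
def xbarVec (n0 nn : ℕ) (X : ℕ → ℕ → ℝ) (i : ℕ) : ℝ :=
  sampleMean (X i) (if i = 0 then n0 else nn)

/-- Tree-order restricted MLE of the control mean `μ₀`:
`μ̂₀ = min_{I ⊆ {1,…,s}} (n₀ X̄₀ + Σ_{i∈I} n X̄ᵢ) / (n₀ + n |I|)` (the minimum includes `I = ∅`). -/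
def treeMLE0 (n0 nn s : ℕ) (xbar : ℕ → ℝ) : ℝ :=
  ((Finset.Icc 1 s).powerset).inf' (Finset.powerset_nonempty _)
    fun I => ((n0 : ℝ) * xbar 0 + ∑ i ∈ I, (nn : ℝ) * xbar i)
      / ((n0 : ℝ) + (nn : ℝ) * I.card)

/-- Tree-order restricted MLE of the `i`-th treatment mean (`1 ≤ i ≤ s`):
`μ̂ᵢ = max (μ̂₀, X̄ᵢ)`. -/
def treeMLE (n0 nn s : ℕ) (xbar : ℕ → ℝ) (i : ℕ) : ℝ :=
  max (treeMLE0 n0 nn s xbar) (xbar i)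

/-- Tree-order restricted MLE of the common variance `σ²`. -/
def sigmaHat (n0 nn s : ℕ) (X : ℕ → ℕ → ℝ) : ℝ :=
  (∑ j ∈ Finset.range n0, (X 0 j - treeMLE0 n0 nn s (xbarVec n0 nn X)) ^ 2
    + ∑ i ∈ Finset.Icc 1 s, ∑ j ∈ Finset.range nn,
        (X i j - treeMLE n0 nn s (xbarVec n0 nn X) i) ^ 2)
    / ((n0 + s * nn : ℕ) : ℝ)

section TreeMLE

variable {n0 nn s : ℕ} {xbar : ℕ → ℝ}

lemma pooled_mul_sub_sum (n0 nn : ℕ) (xbar : ℕ → ℝ) (I : Finset ℕ) (h : ℝ) :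
    ((n0 : ℝ) + nn * #I) * h - ((n0 : ℝ) * xbar 0 + ∑ i ∈ I, (nn : ℝ) * xbar i)
      = n0 * (h - xbar 0) + ∑ i ∈ I, (nn : ℝ) * (h - xbar i) := by
  simp only [mul_sub, Finset.sum_sub_distrib, Finset.sum_const, nsmul_eq_mul]
  ring

lemma treeMLE0_sub_weighted_sum_nonpos (h0 : 1 ≤ n0) {I : Finset ℕ} (hI : I ⊆ Icc 1 s) :
    n0 * (treeMLE0 n0 nn s xbar - xbar 0) + ∑ i ∈ I, (nn : ℝ) * (treeMLE0 n0 nn s xbar - xbar i)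
      ≤ 0 := by
  have hD : (0 : ℝ) < n0 + nn * #I := by positivity
  have hle : treeMLE0 n0 nn s xbar ≤ ((n0 : ℝ) * xbar 0 + ∑ i ∈ I, (nn : ℝ) * xbar i)
      / ((n0 : ℝ) + nn * #I) :=
    Finset.inf'_le _ (Finset.mem_powerset.2 hI)
  rw [le_div_iff₀ hD] at hle
  linarith [pooled_mul_sub_sum n0 nn xbar I (treeMLE0 n0 nn s xbar)]

lemma exists_treeMLE0_sub_weighted_sum_eq_zero (h0 : 1 ≤ n0) :
    ∃ I ⊆ Icc 1 s, n0 * (treeMLE0 n0 nn s xbar - xbar 0)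
      + ∑ i ∈ I, (nn : ℝ) * (treeMLE0 n0 nn s xbar - xbar i) = 0 := by
  obtain ⟨I, hI, heq⟩ := Finset.exists_mem_eq_inf' (Finset.powerset_nonempty (Icc 1 s))
    fun I => ((n0 : ℝ) * xbar 0 + ∑ i ∈ I, (nn : ℝ) * xbar i) / ((n0 : ℝ) + nn * #I)
  have hD : (0 : ℝ) < n0 + nn * #I := by positivity
  refine ⟨I, Finset.mem_powerset.1 hI, ?_⟩
  rw [← pooled_mul_sub_sum, treeMLE0, heq]
  field_simp
  ring

/-- Stationarity of `t ↦ n₀ (X̄₀ - t)² + Σᵢ n (t - X̄ᵢ)₊²` at the tree-order MLE. -/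
lemma treeMLE0_stationary (h0 : 1 ≤ n0) :
    ∑ i ∈ Icc 1 s, (nn : ℝ) * (max (treeMLE0 n0 nn s xbar) (xbar i) - xbar i)
      = n0 * (xbar 0 - treeMLE0 n0 nn s xbar) := by
  set h := treeMLE0 n0 nn s xbar
  have hpos : ∀ i, 0 ≤ max h (xbar i) - xbar i := fun i => by simp
  -- `n₀ (μ̂₀ - X̄₀) + Σ n (μ̂₀ - X̄ᵢ)₊` is the weighted excess over `{i | X̄ᵢ ≤ μ̂₀}`, hence `≤ 0`,
  -- and it dominates the weighted excess over a minimising `I`, which is `0`.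
  have hfilter : ∑ i ∈ Icc 1 s, (nn : ℝ) * (max h (xbar i) - xbar i)
      = ∑ i ∈ (Icc 1 s).filter (fun i => xbar i ≤ h), (nn : ℝ) * (h - xbar i) := by
    rw [Finset.sum_filter]
    refine Finset.sum_congr rfl fun i _ => ?_
    split_ifs with hi
    · rw [max_eq_left hi]
    · rw [max_eq_right (not_le.1 hi).le, sub_self, mul_zero]
  have hupper := treeMLE0_sub_weighted_sum_nonpos (nn := nn) (xbar := xbar) h0
    (Finset.filter_subset (fun i => xbar i ≤ h) (Icc 1 s))
  obtain ⟨I, hI, hzero⟩ :=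
    exists_treeMLE0_sub_weighted_sum_eq_zero (nn := nn) (s := s) (xbar := xbar) h0
  have hlower : ∑ i ∈ I, (nn : ℝ) * (h - xbar i)
      ≤ ∑ i ∈ Icc 1 s, (nn : ℝ) * (max h (xbar i) - xbar i) :=
    calc ∑ i ∈ I, (nn : ℝ) * (h - xbar i)
        ≤ ∑ i ∈ I, (nn : ℝ) * (max h (xbar i) - xbar i) :=
          Finset.sum_le_sum fun i _ => by gcongr; exact le_max_left _ _
      _ ≤ _ := Finset.sum_le_sum_of_subset_of_nonneg hI fun i _ _ =>
          mul_nonneg (Nat.cast_nonneg nn) (hpos i)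
  linarith

lemma sq_sub_max_add_le {a h t m : ℝ} (htm : t ≤ m) :
    (a - max h a) ^ 2 + 2 * (t - h) * (max h a - a) ≤ (a - m) ^ 2 := by
  rcases le_total h a with hha | hah
  · simp [max_eq_right hha, sq_nonneg]
  · rw [max_eq_left hah]
    rcases le_total a t with hat | hta
    · nlinarith [sq_nonneg (t - h)]
    · nlinarith [sq_nonneg (a - m)]

lemma treeMLE_le_weighted_sq (h0 : 1 ≤ n0) {m : ℕ → ℝ} (hm : ∀ i ∈ Icc 1 s, m 0 ≤ m i) :
    n0 * (xbar 0 - treeMLE0 n0 nn s xbar) ^ 2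
        + ∑ i ∈ Icc 1 s, (nn : ℝ) * (xbar i - treeMLE n0 nn s xbar i) ^ 2
      ≤ n0 * (xbar 0 - m 0) ^ 2 + ∑ i ∈ Icc 1 s, (nn : ℝ) * (xbar i - m i) ^ 2 := by
  set h := treeMLE0 n0 nn s xbar
  have hterms := Finset.sum_le_sum fun i hi => mul_le_mul_of_nonneg_left
    (sq_sub_max_add_le (a := xbar i) (h := h) (hm i hi)) (Nat.cast_nonneg (α := ℝ) nn)
  simp only [mul_add, Finset.sum_add_distrib] at hterms
  have hcross : ∑ i ∈ Icc 1 s, (nn : ℝ) * (2 * (m 0 - h) * (max h (xbar i) - xbar i))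
      = 2 * (m 0 - h) * (n0 * (xbar 0 - h)) := by
    rw [← treeMLE0_stationary h0, Finset.mul_sum]
    exact Finset.sum_congr rfl fun i _ => by ring
  have hn0 : (0 : ℝ) ≤ n0 := Nat.cast_nonneg n0
  simp only [treeMLE]
  nlinarith [mul_nonneg hn0 (sq_nonneg (m 0 - h))]

end TreeMLE

lemma sum_sq_sub_eq_sum_sq_sub_sampleMean_add (x : ℕ → ℝ) (n : ℕ) (c : ℝ) :
    ∑ j ∈ range n, (x j - c) ^ 2
      = ∑ j ∈ range n, (x j - sampleMean x n) ^ 2 + n * (sampleMean x n - c) ^ 2 := by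
  rcases Nat.eq_zero_or_pos n with rfl | hn
  · simp
  have hsum : ∑ j ∈ range n, x j = n * sampleMean x n := by
    rw [sampleMean]; field_simp
  have hterm : ∀ j, (x j - c) ^ 2 = (x j - sampleMean x n) ^ 2
      + (2 * (sampleMean x n - c) * x j - (sampleMean x n - c) * (sampleMean x n + c)) :=
    fun j => by ring
  simp only [hterm, Finset.sum_add_distrib, Finset.sum_sub_distrib, ← Finset.mul_sum, hsum,
    Finset.sum_const, Finset.card_range, nsmul_eq_mul]
  ring

def sampleIndices (n0 nn s : ℕ) : Finset (ℕ × ℕ) :=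
  {0} ×ˢ range n0 ∪ Icc 1 s ×ˢ range nn

lemma disjoint_sampleIndices (n0 nn s : ℕ) : Disjoint ({0} ×ˢ range n0) (Icc 1 s ×ˢ range nn) :=
  Finset.disjoint_left.2 fun p hp hp' => by
    simp only [Finset.mem_product, Finset.mem_singleton, Finset.mem_Icc] at hp hp'
    omega

lemma card_sampleIndices (n0 nn s : ℕ) : #(sampleIndices n0 nn s) = n0 + s * nn := by
  rw [sampleIndices, Finset.card_union_of_disjoint (disjoint_sampleIndices n0 nn s)]
  simp

lemma sum_sampleIndices (n0 nn s : ℕ) (f : ℕ → ℕ → ℝ) :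
    ∑ p ∈ sampleIndices n0 nn s, f p.1 p.2
      = ∑ j ∈ range n0, f 0 j + ∑ i ∈ Icc 1 s, ∑ j ∈ range nn, f i j := by
  rw [sampleIndices, Finset.sum_union (disjoint_sampleIndices n0 nn s), Finset.sum_product,
    Finset.sum_product, Finset.sum_singleton]

lemma sampleIndices_mono {n0 n0' nn nn' s s' : ℕ} (h0 : n0 ≤ n0') (hn : nn ≤ nn') (hs : s ≤ s') :
    sampleIndices n0 nn s ⊆ sampleIndices n0' nn' s' :=
  Finset.union_subset_union
    (Finset.product_subset_product subset_rfl (Finset.range_subset_range.2 h0))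
    (Finset.product_subset_product (Finset.Icc_subset_Icc le_rfl hs)
      (Finset.range_subset_range.2 hn))

lemma sigmaHat_nonneg (n0 nn s : ℕ) (X : ℕ → ℕ → ℝ) : 0 ≤ sigmaHat n0 nn s X := by
  unfold sigmaHat
  positivity

lemma sigmaHat_le_of_treeOrder {n0 nn s : ℕ} (h0 : 1 ≤ n0) (X : ℕ → ℕ → ℝ) {m : ℕ → ℝ}
    (hm : ∀ i ∈ Icc 1 s, m 0 ≤ m i) :
    sigmaHat n0 nn s X
      ≤ (∑ p ∈ sampleIndices n0 nn s, (X p.1 p.2 - m p.1) ^ 2) / ((n0 + s * nn : ℕ) : ℝ) := by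
  have hN : (0 : ℝ) < ((n0 + s * nn : ℕ) : ℝ) := by positivity
  rw [sigmaHat, sum_sampleIndices n0 nn s fun i j => (X i j - m i) ^ 2,
    div_le_div_iff_of_pos_right hN]
  set xbar := xbarVec n0 nn X
  have hdecomp : ∀ i ∈ Icc 1 s, ∀ c : ℝ, ∑ j ∈ range nn, (X i j - c) ^ 2
      = ∑ j ∈ range nn, (X i j - sampleMean (X i) nn) ^ 2 + nn * (xbar i - c) ^ 2 := by
    intro i hi c
    have hi0 : i ≠ 0 := by have := (Finset.mem_Icc.1 hi).1; omega
    rw [sum_sq_sub_eq_sum_sq_sub_sampleMean_add]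
    simp [xbar, xbarVec, hi0]
  rw [sum_sq_sub_eq_sum_sq_sub_sampleMean_add (X 0) n0 (treeMLE0 n0 nn s xbar),
    sum_sq_sub_eq_sum_sq_sub_sampleMean_add (X 0) n0 (m 0),
    Finset.sum_congr rfl fun i hi => hdecomp i hi _,
    Finset.sum_congr rfl fun i hi => hdecomp i hi _,
    Finset.sum_add_distrib, Finset.sum_add_distrib]
  have hxbar0 : sampleMean (X 0) n0 = xbar 0 := by simp [xbar, xbarVec]
  have := treeMLE_le_weighted_sq (nn := nn) (xbar := xbar) h0 hm
  rw [hxbar0]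
  linarith

section Enumeration

variable {ι : Type*} [DecidableEq ι]

def blockList (S : ℕ → Finset ι) : ℕ → List ι
  | 0 => (S 0).toList
  | s + 1 => blockList S s ++ (S (s + 1) \ S s).toList

variable {S : ℕ → Finset ι}

lemma toFinset_blockList (hS : Monotone S) (s : ℕ) : (blockList S s).toFinset = S s := by
  induction s with
  | zero => simp [blockList]
  | succ s ih =>
    rw [blockList, List.toFinset_append, ih, Finset.toList_toFinset,
      Finset.union_sdiff_of_subset (hS s.le_succ)]

lemma nodup_blockList (hS : Monotone S) (s : ℕ) : (blockList S s).Nodup := by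
  induction s with
  | zero => exact Finset.nodup_toList _
  | succ s ih =>
    refine ih.append (Finset.nodup_toList _) fun a ha hb => ?_
    rw [← List.mem_toFinset, toFinset_blockList hS] at ha
    exact (Finset.mem_sdiff.1 (Finset.mem_toList.1 hb)).2 ha

lemma length_blockList (hS : Monotone S) (s : ℕ) : (blockList S s).length = #(S s) := by
  rw [← toFinset_blockList hS s, List.toFinset_card_of_nodup (nodup_blockList hS s)]

lemma blockList_prefix {s t : ℕ} (hst : s ≤ t) : blockList S s <+: blockList S t := by
  induction t, hst using Nat.le_induction with
  | base => exact List.prefix_refl _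
  | succ t _ ih => exact ih.trans (List.prefix_append _ _)

lemma blockList_getElem_eq (hS : Monotone S) {s t k : ℕ} (hs : k < #(S s)) (ht : k < #(S t)) :
    (blockList S s)[k]'((length_blockList hS s).symm ▸ hs)
      = (blockList S t)[k]'((length_blockList hS t).symm ▸ ht) := by
  rcases le_total s t with hst | hts
  · exact (blockList_prefix hst).getElem _
  · exact ((blockList_prefix hts).getElem _).symm

lemma exists_injective_image_range_card (hS : Monotone S)
    (hcard : Tendsto (fun s => #(S s)) atTop atTop) :
    ∃ e : ℕ → ι, Function.Injective e ∧ ∀ s, (range #(S s)).image e = S s := by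
  have hex : ∀ k, ∃ s, k < #(S s) := fun k => (hcard.eventually_gt_atTop k).exists
  let e : ℕ → ι := fun k =>
    (blockList S (Nat.find (hex k)))[k]'((length_blockList hS _).symm ▸ Nat.find_spec (hex k))
  have he : ∀ s k (hk : k < #(S s)), e k = (blockList S s)[k]'((length_blockList hS s).symm ▸ hk) :=
    fun s k hk => blockList_getElem_eq hS (Nat.find_spec (hex k)) hk
  refine ⟨e, fun k l hkl => ?_, fun s => ?_⟩
  · obtain ⟨s, hs⟩ := hex (max k l)
    rw [he s k (lt_of_le_of_lt (le_max_left k l) hs),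
      he s l (lt_of_le_of_lt (le_max_right k l) hs)] at hkl
    exact (nodup_blockList hS s).getElem_inj_iff.1 hkl
  · have hinj : Set.InjOn e (range #(S s)) := fun k hk l hl hkl => by
      simp only [Finset.coe_range, Set.mem_Iio] at hk hl
      rw [he s k hk, he s l hl] at hkl
      exact (nodup_blockList hS s).getElem_inj_iff.1 hkl
    refine Finset.eq_of_subset_of_card_le (fun x hx => ?_) ?_
    · obtain ⟨k, hk, rfl⟩ := Finset.mem_image.1 hx
      rw [he s k (Finset.mem_range.1 hk)]
      exact (Finset.ext_iff.1 (toFinset_blockList hS s) _).1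
        (List.mem_toFinset.2 (List.getElem_mem _))
    · rw [Finset.card_image_of_injOn hinj, Finset.card_range]

end Enumeration

theorem ae_tendsto_sum_div_card_of_monotone {Ω ι : Type*} [MeasurableSpace Ω] {P : Measure Ω}
    (Y : ι → Ω → ℝ) (i₀ : ι) (hint : Integrable (Y i₀) P)
    (hindep : Pairwise fun i j => Y i ⟂ᵢ[P] Y j) (hident : ∀ i, IdentDistrib (Y i) (Y i₀) P P)
    {S : ℕ → Finset ι} (hS : Monotone S) (hcard : Tendsto (fun s => #(S s)) atTop atTop) :
    ∀ᵐ ω ∂P, Tendsto (fun s => (∑ i ∈ S s, Y i ω) / #(S s)) atTop (𝓝 P[Y i₀]) := by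
  classical
  obtain ⟨e, he, himage⟩ := exists_injective_image_range_card hS hcard
  have hslln := strong_law_ae_real (Y ∘ e) ((hident (e 0)).integrable_iff.2 hint)
    (fun k l hkl => hindep (he.ne hkl)) fun k => (hident (e k)).trans (hident (e 0)).symm
  rw [Function.comp_apply, (hident (e 0)).integral_eq] at hslln
  filter_upwards [hslln] with ω hω
  refine (hω.comp hcard).congr fun s => ?_
  simp only [Function.comp_apply]
  rw [← himage s, Finset.sum_image he.injOn, Finset.card_image_of_injective _ he,
    Finset.card_range]

lemma integral_sq_gaussianReal_zero (v : ℝ≥0) : ∫ x, x ^ 2 ∂gaussianReal 0 v = v := by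
  have h := variance_fun_id_gaussianReal (μ := 0) (v := v)
  rw [variance_eq_integral measurable_id'.aemeasurable, integral_id_gaussianReal] at h
  simpa using h

lemma identDistrib_sq_sub_gaussianReal {Ω : Type*} [MeasurableSpace Ω] {P : Measure Ω}
    {X : Ω → ℝ} {m : ℝ} {v : ℝ≥0} (hX : HasLaw X (gaussianReal m v) P) :
    IdentDistrib (fun ω => (X ω - m) ^ 2) (fun x => x ^ 2) P (gaussianReal 0 v) := by
  have hsq : HasLaw (fun x : ℝ => x ^ 2) ((gaussianReal 0 v).map (· ^ 2)) (gaussianReal 0 v) :=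
    ⟨by fun_prop, rfl⟩
  have hcentered := gaussianReal_sub_const hX m
  rw [sub_self] at hcentered
  exact (hsq.comp hcentered).identDistrib hsq

lemma limsup_mem_Icc_of_nonneg_of_le_tendsto {α : Type*} {l : Filter α} [l.NeBot]
    {a b : α → ℝ} {L : ℝ} (ha : ∀ x, 0 ≤ a x) (hab : ∀ x, a x ≤ b x) (hb : Tendsto b l (𝓝 L)) :
    limsup a l ∈ Set.Icc 0 L := by
  have hbdd : IsBoundedUnder (· ≤ ·) l a :=
    hb.isBoundedUnder_le.mono_le (Eventually.of_forall hab)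
  refine ⟨le_limsup_of_frequently_le (Frequently.of_forall ha) hbdd, ?_⟩
  rw [← hb.limsup_eq]
  exact limsup_le_limsup (Eventually.of_forall hab)
    (isBoundedUnder_of ⟨0, ha⟩).isCoboundedUnder_le hb.isBoundedUnder_le

theorem limsup_sigmaHat_le_variance_general
    {Ω : Type*} [MeasurableSpace Ω] (P : Measure Ω)
    (μ : ℕ → ℝ) (v : ℝ≥0)
    (n0 nn : ℕ → ℕ)
    -- A1: tree order restriction
    (hA1 : ∀ i, 1 ≤ i → μ 0 ≤ μ i)
    -- A4: common treatment sample size, non-decreasing sample sizes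
    (h0pos : ∀ s, 1 ≤ n0 s)
    (h0mono : Monotone n0) (hnmono : Monotone nn)
    -- A3: independent normal observations, common variance v
    (X : ℕ → ℕ → Ω → ℝ)
    (hmeas : ∀ i j, Measurable (X i j))
    (hindep : iIndepFun (fun p : ℕ × ℕ => X p.1 p.2) P)
    (hdist : ∀ i j, Measure.map (X i j) P = gaussianReal (μ i) v)
    (hN : Tendsto (fun s : ℕ => n0 s + s * nn s) atTop atTop) :
    ∀ᵐ ω ∂P,
      0 ≤ Filter.limsup (fun s : ℕ => sigmaHat (n0 s) (nn s) s fun i j => X i j ω) atTop ∧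
      Filter.limsup (fun s : ℕ => sigmaHat (n0 s) (nn s) s fun i j => X i j ω) atTop
        ≤ (v : ℝ) := by
  let Z : ℕ × ℕ → Ω → ℝ := fun p ω => (X p.1 p.2 ω - μ p.1) ^ 2
  have hZ : ∀ p, IdentDistrib (Z p) (fun x => x ^ 2) P (gaussianReal 0 v) := fun p =>
    identDistrib_sq_sub_gaussianReal ⟨(hmeas _ _).aemeasurable, hdist _ _⟩
  have hZindep : Pairwise fun p q => Z p ⟂ᵢ[P] Z q := fun p q hpq =>
    (hindep.indepFun hpq).comp (φ := fun x => (x - μ p.1) ^ 2) (ψ := fun x => (x - μ q.1) ^ 2)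
      (by fun_prop) (by fun_prop)
  have hZint : Integrable (Z (0, 0)) P :=
    (hZ _).integrable_iff.2 (memLp_id_gaussianReal 2).integrable_sq
  have hZmean : P[Z (0, 0)] = (v : ℝ) := (hZ _).integral_eq.trans (integral_sq_gaussianReal_zero v)
  have hslln := ae_tendsto_sum_div_card_of_monotone Z (0, 0) hZint hZindep
    (fun p => (hZ p).trans (hZ (0, 0)).symm)
    (S := fun s => sampleIndices (n0 s) (nn s) s)
    (fun s t hst => sampleIndices_mono (h0mono hst) (hnmono hst) hst)
    (by simpa only [card_sampleIndices] using hN)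
  filter_upwards [hslln] with ω hω
  rw [hZmean] at hω
  refine limsup_mem_Icc_of_nonneg_of_le_tendsto (fun s => sigmaHat_nonneg _ _ _ _)
    (fun s => ?_) hω
  rw [card_sampleIndices]
  exact sigmaHat_le_of_treeOrder (h0pos s) _ fun i hi => hA1 i (Finset.mem_Icc.1 hi).1

/-- Under A1–A4, if the total sample size `N⁽ˢ⁾ = n₀⁽ˢ⁾ + s n⁽ˢ⁾ → ∞`,
then almost surely `0 ≤ limsup_{s→∞} σ̂²_{(s)} ≤ σ²`. -/
theorem limsup_sigmaHat_le_variance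
    {Ω : Type*} [MeasurableSpace Ω] (P : Measure Ω) [IsProbabilityMeasure P]
    (μ : ℕ → ℝ) (v : ℝ≥0) (hv : v ≠ 0)
    (n0 nn : ℕ → ℕ)
    -- A1: tree order restriction
    (hA1 : ∀ i, 1 ≤ i → μ 0 ≤ μ i)
    -- A2: uniformly bounded means
    (hA2 : ∃ B > 0, ∀ i, μ i ≤ B)
    -- A4: common treatment sample size, non-decreasing sample sizes
    (h0pos : ∀ s, 1 ≤ n0 s) (hnpos : ∀ s, 1 ≤ nn s)
    (h0mono : Monotone n0) (hnmono : Monotone nn)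
    -- A3: independent normal observations, common variance v
    (X : ℕ → ℕ → Ω → ℝ)
    (hmeas : ∀ i j, Measurable (X i j))
    (hindep : iIndepFun (fun p : ℕ × ℕ => X p.1 p.2) P)
    (hdist : ∀ i j, Measure.map (X i j) P = gaussianReal (μ i) v)
    (hN : Tendsto (fun s : ℕ => n0 s + s * nn s) atTop atTop) :
    ∀ᵐ ω ∂P,
      0 ≤ Filter.limsup (fun s : ℕ => sigmaHat (n0 s) (nn s) s fun i j => X i j ω) atTop ∧
      Filter.limsup (fun s : ℕ => sigmaHat (n0 s) (nn s) s fun i j => X i j ω) atTop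
        ≤ (v : ℝ) :=
  limsup_sigmaHat_le_variance_general P μ v n0 nn hA1 h0pos h0mono hnmono X hmeas hindep hdist hN
end
end

section
/- Under assumptions A1–A4, if n_0^{(s)} = n^{(s)} = m for all s, where m ≥ 2 is a fixed integer, then σ̂²_{(s)} → ((m−1)/m) σ² almost surely as s → ∞; in particular the MLE of the variance is inconsistent. -/
/-!
Centre the observations, `Y i j = X i j - μ i`. Expanding each group's residual sum of squares
about the true mean gives
`(s + 1) m σ̂² = ∑ᵢ ∑ⱼ Y i j ^ 2 - m ∑ᵢ (X̄ᵢ - μᵢ) ^ 2 + m R_s`,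
where `R_s` collects the squared gaps between the sample means and the fitted tree-ordered
means. The blocks `(Y i 0, …, Y i (m - 1))` are i.i.d., so by the strong law the first two sums,
divided by `s + 1`, tend to `m σ²` and `σ² / m`. The fitted control mean lies between
`minᵢ X̄ᵢ` and `X̄₀`, and the treatment means it pulls up are pooled with `X̄₀`; with
`μ₀ ≤ μᵢ` this gives `R_s ≤ 4 (X̄₀ - μ₀) ^ 2 + 4 maxᵢ≤ₛ (X̄ᵢ - μᵢ) ^ 2`. The running maximum of
a sequence with convergent Cesàro means is `o(s)`, so `R_s / (s + 1) → 0` and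
`σ̂² → (m σ² - σ²) / m`.
-/

open MeasureTheory ProbabilityTheory Filter Finset BoundedContinuousFunction
open scoped NNReal Topology

noncomputable section


theorem tendsto_div_of_tendsto_sum_range_div {d : ℕ → ℝ} {b : ℝ}
    (h : Tendsto (fun n : ℕ => (∑ i ∈ range n, d i) / n) atTop (𝓝 b)) :
    Tendsto (fun n : ℕ => d n / n) atTop (𝓝 0) := by
  have hsucc : Tendsto (fun n : ℕ => (∑ i ∈ range (n + 1), d i) / (n + 1 : ℕ) * ((n + 1) / n))
      atTop (𝓝 (b * 1)) := by
    refine ((tendsto_add_atTop_iff_nat 1).2 h).mul ?_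
    simpa [inv_div] using (tendsto_natCast_div_add_atTop (1 : ℝ)).inv₀ one_ne_zero
  convert hsucc.sub h using 1
  · funext n
    rcases eq_or_ne n 0 with rfl | hn
    · simp
    · have : (n : ℝ) + 1 ≠ 0 := by positivity
      rw [sum_range_succ]
      push_cast
      field_simp
      ring
  · simp

theorem partialSups_le_abs_add_mul {d : ℕ → ℝ} {N : ℕ} {ε : ℝ} (hε : 0 ≤ ε)
    (hd : ∀ i ≥ N, d i ≤ ε * i) (n : ℕ) : partialSups d n ≤ |partialSups d N| + ε * n := by
  refine partialSups_le d n _ fun i hi => ?_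
  rcases le_total i N with hiN | hNi
  · have := (le_partialSups_of_le d hiN).trans (le_abs_self _)
    have : 0 ≤ ε * n := by positivity
    linarith
  · have : ε * i ≤ ε * n := by gcongr
    linarith [hd i hNi, abs_nonneg (partialSups d N)]

theorem tendsto_partialSups_div_of_tendsto_div {d : ℕ → ℝ}
    (h : Tendsto (fun n : ℕ => d n / n) atTop (𝓝 0)) :
    Tendsto (fun n : ℕ => partialSups d n / (n + 1)) atTop (𝓝 0) := by
  have hinv : Tendsto (fun n : ℕ => ((n : ℝ) + 1)⁻¹) atTop (𝓝 0) := by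
    simpa only [one_div] using tendsto_one_div_add_atTop_nhds_zero_nat (𝕜 := ℝ)
  rw [tendsto_order]
  refine ⟨fun a ha => ?_, fun a ha => ?_⟩
  · have hd0 : Tendsto (fun n : ℕ => d 0 * ((n : ℝ) + 1)⁻¹) atTop (𝓝 0) := by
      simpa using hinv.const_mul (d 0)
    filter_upwards [hd0.eventually (lt_mem_nhds ha)] with n hn
    rw [mul_comm, ← div_eq_inv_mul] at hn
    exact hn.trans_le (by gcongr; exact le_partialSups_of_le d n.zero_le)
  · obtain ⟨N, hN⟩ := eventually_atTop.1 <|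
      (h.eventually (gt_mem_nhds (half_pos ha))).and (eventually_gt_atTop 0)
    have hd : ∀ i ≥ N, d i ≤ a / 2 * i := fun i hi =>
      ((div_lt_iff₀ (Nat.cast_pos.2 (hN i hi).2)).1 (hN i hi).1).le
    set C := |partialSups d N|
    have hC : Tendsto (fun n : ℕ => C * ((n : ℝ) + 1)⁻¹) atTop (𝓝 0) := by
      simpa using hinv.const_mul C
    filter_upwards [hC.eventually (gt_mem_nhds (half_pos ha))] with n hn
    have hfrac : a / 2 * n / (n + 1) ≤ a / 2 := by
      rw [div_le_iff₀ (by positivity)]; nlinarith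
    calc partialSups d n / (n + 1) ≤ (C + a / 2 * n) / (n + 1) := by
          gcongr; exact partialSups_le_abs_add_mul (by positivity) hd n
      _ = C * ((n : ℝ) + 1)⁻¹ + a / 2 * n / (n + 1) := by rw [add_div, div_eq_mul_inv C]
      _ < a := by linarith

section TreeOrder

variable {n0 nn m s : ℕ} {xbar : ℕ → ℝ}

theorem treeMLE0_le_avg {I : Finset ℕ} (hI : I ⊆ Icc 1 s) :
    treeMLE0 n0 nn s xbar ≤ (n0 * xbar 0 + ∑ i ∈ I, nn * xbar i) / (n0 + nn * #I) :=
  inf'_le _ (mem_powerset.2 hI)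

theorem treeMLE0_le_xbar_zero (hn0 : n0 ≠ 0) : treeMLE0 n0 nn s xbar ≤ xbar 0 := by
  simpa [hn0] using treeMLE0_le_avg (n0 := n0) (nn := nn) (xbar := xbar) (empty_subset (Icc 1 s))

theorem inf'_range_le_treeMLE0 (hn0 : n0 ≠ 0) :
    (range (s + 1)).inf' nonempty_range_add_one xbar ≤ treeMLE0 n0 nn s xbar := by
  refine le_inf' _ _ fun I hI => ?_
  set t := (range (s + 1)).inf' nonempty_range_add_one xbar
  have hle : ∀ i ≤ s, t ≤ xbar i := fun i hi => inf'_le _ (mem_range_succ_iff.2 hi)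
  have hsplit : t * (n0 + nn * #I) = n0 * t + ∑ i ∈ I, nn * t := by
    rw [sum_const, nsmul_eq_mul]; ring
  rw [le_div_iff₀ (by positivity), hsplit]
  gcongr with i hi
  · exact hle 0 s.zero_le
  · exact hle i (mem_Icc.1 (mem_powerset.1 hI hi)).2

theorem exists_le_treeMLE0 (hn0 : n0 ≠ 0) : ∃ i ≤ s, xbar i ≤ treeMLE0 n0 nn s xbar := by
  obtain ⟨i, hi, heq⟩ := exists_mem_eq_inf' (nonempty_range_add_one (n := s)) xbar
  exact ⟨i, mem_range_succ_iff.1 hi, heq ▸ inf'_range_le_treeMLE0 hn0⟩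

theorem sum_sq_treeMLE_sub_le (hm : m ≠ 0) :
    ∑ i ∈ Icc 1 s, (xbar i - treeMLE m m s xbar i) ^ 2 ≤ (xbar 0 - treeMLE0 m m s xbar) ^ 2 := by
  set c := treeMLE0 m m s xbar
  set A := (Icc 1 s).filter (xbar · < c)
  have hsum : ∑ i ∈ Icc 1 s, (xbar i - treeMLE m m s xbar i) ^ 2 = ∑ i ∈ A, (c - xbar i) ^ 2 := by
    rw [sum_filter]
    refine sum_congr rfl fun i _ => ?_
    split_ifs with h
    · rw [treeMLE, max_eq_left h.le, sub_sq_comm]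
    · rw [treeMLE, max_eq_right (not_lt.1 h), sub_self, sq, mul_zero]
  have hpos : ∀ i ∈ A, 0 ≤ c - xbar i := fun i hi => sub_nonneg.2 (mem_filter.1 hi).2.le
  -- the pooled average over `{0} ∪ A` is at least `c`
  have hA : ∑ i ∈ A, (c - xbar i) ≤ xbar 0 - c := by
    have h := treeMLE0_le_avg (n0 := m) (nn := m) (xbar := xbar) (filter_subset _ _ : A ⊆ Icc 1 s)
    rw [le_div_iff₀ (by positivity), ← mul_sum] at h
    rw [sum_sub_distrib, sum_const, nsmul_eq_mul]
    refine le_of_mul_le_mul_left ?_ (Nat.cast_pos.2 (Nat.pos_of_ne_zero hm))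
    linear_combination h
  rw [hsum]
  exact (sum_sq_le_sq_sum_of_nonneg hpos).trans (pow_le_pow_left₀ (sum_nonneg hpos) hA 2)

def treeResidual (m s : ℕ) (xbar : ℕ → ℝ) : ℝ :=
  (xbar 0 - treeMLE0 m m s xbar) ^ 2 + ∑ i ∈ Icc 1 s, (xbar i - treeMLE m m s xbar i) ^ 2

theorem treeResidual_nonneg : 0 ≤ treeResidual m s xbar := by
  unfold treeResidual; positivity

theorem treeResidual_le (hm : m ≠ 0) {μ : ℕ → ℝ} (hμ : ∀ i, 1 ≤ i → μ 0 ≤ μ i) :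
    treeResidual m s xbar
      ≤ 4 * (xbar 0 - μ 0) ^ 2 + 4 * partialSups (fun i => (xbar i - μ i) ^ 2) s := by
  obtain ⟨k, hks, hk⟩ := exists_le_treeMLE0 (nn := m) (s := s) (xbar := xbar) hm
  have hμk : μ 0 ≤ μ k := by
    rcases Nat.eq_zero_or_pos k with rfl | hk0
    · rfl
    · exact hμ k hk0
  have hgap : xbar 0 - treeMLE0 m m s xbar ≤ (xbar 0 - μ 0) - (xbar k - μ k) := by linarith
  have hsq : (xbar 0 - treeMLE0 m m s xbar) ^ 2
      ≤ 2 * (xbar 0 - μ 0) ^ 2 + 2 * (xbar k - μ k) ^ 2 := by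
    nlinarith [treeMLE0_le_xbar_zero (nn := m) (s := s) (xbar := xbar) hm,
      sq_nonneg (xbar 0 - μ 0 + (xbar k - μ k))]
  have hsup := le_partialSups_of_le (fun i => (xbar i - μ i) ^ 2) hks
  have := sum_sq_treeMLE_sub_le (s := s) (xbar := xbar) hm
  unfold treeResidual
  linarith

end TreeOrder

theorem sampleMean_sub_const {m : ℕ} (hm : m ≠ 0) (y : ℕ → ℝ) (c : ℝ) :
    sampleMean (fun j => y j - c) m = sampleMean y m - c := by
  have : (m : ℝ) ≠ 0 := Nat.cast_ne_zero.2 hm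
  simp only [sampleMean, sum_sub_distrib, sum_const, card_range, nsmul_eq_mul]
  field_simp

theorem xbarVec_eq_sampleMean (m : ℕ) (x : ℕ → ℕ → ℝ) (i : ℕ) :
    xbarVec m m x i = sampleMean (x i) m := by
  simp [xbarVec]

theorem sum_range_sq_sub_eq {m : ℕ} (hm : m ≠ 0) (y : ℕ → ℝ) (a c : ℝ) :
    ∑ j ∈ range m, (y j - a) ^ 2
      = ∑ j ∈ range m, (y j - c) ^ 2 - m * (sampleMean y m - c) ^ 2
        + m * (sampleMean y m - a) ^ 2 := by
  have : (m : ℝ) ≠ 0 := Nat.cast_ne_zero.2 hm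
  simp only [sampleMean, sub_sq, sum_add_distrib, sum_sub_distrib, ← mul_sum, ← sum_mul,
    sum_const, card_range, nsmul_eq_mul]
  field_simp
  ring

theorem sigmaHat_eq {m : ℕ} (hm : m ≠ 0) (μ : ℕ → ℝ) (x : ℕ → ℕ → ℝ) (s : ℕ) :
    sigmaHat m m s x
      = (∑ i ∈ range (s + 1), ∑ j ∈ range m, (x i j - μ i) ^ 2
          - m * ∑ i ∈ range (s + 1), (sampleMean (x i) m - μ i) ^ 2
          + m * treeResidual m s (xbarVec m m x)) / ((s + 1) * m) := by
  have hgroup : ∀ i a, ∑ j ∈ range m, (x i j - a) ^ 2 = ∑ j ∈ range m, (x i j - μ i) ^ 2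
      - m * (sampleMean (x i) m - μ i) ^ 2 + m * (xbarVec m m x i - a) ^ 2 := fun i a => by
    rw [xbarVec_eq_sampleMean]; exact sum_range_sq_sub_eq hm (x i) a (μ i)
  have hsplit : ∀ f : ℕ → ℝ, ∑ i ∈ range (s + 1), f i = f 0 + ∑ i ∈ Icc 1 s, f i := fun f => by
    rw [Nat.range_succ_eq_Icc_zero, ← insert_Icc_add_one_left_eq_Icc s.zero_le,
      sum_insert (by simp), zero_add]
  rw [sigmaHat, treeResidual, hsplit, hsplit, hgroup 0,
    sum_congr rfl fun i _ => hgroup i (treeMLE m m s (xbarVec m m x) i)]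
  simp only [sum_add_distrib, sum_sub_distrib, ← mul_sum]
  push_cast
  ring

theorem tendsto_sigmaHat_of_tendsto_avg {m : ℕ} (hm : m ≠ 0) {μ : ℕ → ℝ}
    (hμ : ∀ i, 1 ≤ i → μ 0 ≤ μ i) {x : ℕ → ℕ → ℝ} {a b : ℝ}
    (hW : Tendsto (fun n : ℕ => (∑ i ∈ range n, ∑ j ∈ range m, (x i j - μ i) ^ 2) / n)
      atTop (𝓝 a))
    (hD : Tendsto (fun n : ℕ => (∑ i ∈ range n, (sampleMean (x i) m - μ i) ^ 2) / n)
      atTop (𝓝 b)) :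
    Tendsto (fun s => sigmaHat m m s x) atTop (𝓝 ((a - m * b) / m)) := by
  have hinv : Tendsto (fun s : ℕ => ((s : ℝ) + 1)⁻¹) atTop (𝓝 0) := by
    simpa only [one_div] using tendsto_one_div_add_atTop_nhds_zero_nat (𝕜 := ℝ)
  have hR : Tendsto (fun s : ℕ => treeResidual m s (xbarVec m m x) / (s + 1)) atTop (𝓝 0) := by
    have hbound := ((hinv.const_mul (4 * (sampleMean (x 0) m - μ 0) ^ 2)).add
      ((tendsto_partialSups_div_of_tendsto_div (tendsto_div_of_tendsto_sum_range_div hD)).const_mul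
        4))
    simp only [mul_zero, add_zero] at hbound
    refine squeeze_zero (fun s => div_nonneg treeResidual_nonneg (by positivity))
      (fun s => ?_) hbound
    rw [← div_eq_mul_inv, mul_div_assoc', ← add_div]
    gcongr
    simpa only [xbarVec_eq_sampleMean] using treeResidual_le (s := s) (xbar := xbarVec m m x) hm hμ
  have hlim := ((((tendsto_add_atTop_iff_nat 1).2 hW).sub
    (((tendsto_add_atTop_iff_nat 1).2 hD).const_mul (m : ℝ))).add
      (hR.const_mul (m : ℝ))).div_const (m : ℝ)
  rw [mul_zero, add_zero] at hlim
  refine hlim.congr fun s => ?_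
  rw [sigmaHat_eq hm μ]
  have : (m : ℝ) ≠ 0 := Nat.cast_ne_zero.2 hm
  push_cast
  field_simp

section PiMoments

variable {ν : Measure ℝ} [IsProbabilityMeasure ν]

theorem integral_sum_sq_pi (hν : MemLp id 2 ν) (m : ℕ) :
    ∫ y, ∑ j, y j ^ 2 ∂(Measure.pi fun _ : Fin m => ν) = m * ∫ x, x ^ 2 ∂ν := by
  rw [integral_finsetSum _ fun j _ => integrable_comp_eval (μ := fun _ : Fin m => ν) (i := j)
    (f := fun x : ℝ => x ^ 2) hν.integrable_sq]
  have hj : ∀ j, ∫ y, y j ^ 2 ∂(Measure.pi fun _ : Fin m => ν) = ∫ x, x ^ 2 ∂ν := fun j =>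
    integral_comp_eval (μ := fun _ : Fin m => ν) (f := fun x : ℝ => x ^ 2)
      (continuous_pow 2).aestronglyMeasurable
  simp [hj]

theorem integral_sq_sum_pi (hν : MemLp id 2 ν) (hν0 : ∫ x, x ∂ν = 0) (m : ℕ) :
    ∫ y, (∑ j, y j) ^ 2 ∂(Measure.pi fun _ : Fin m => ν) = m * ∫ x, x ^ 2 ∂ν := by
  have hvar := variance_sum_pi (μ := fun _ : Fin m => ν) (X := fun _ => id) fun _ => hν
  have hmean : ∫ y, ∑ j, y j ∂(Measure.pi fun _ : Fin m => ν) = 0 := by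
    rw [integral_finsetSum _ fun j _ => integrable_comp_eval (μ := fun _ : Fin m => ν) (i := j)
      (f := fun x : ℝ => x) (hν.integrable one_le_two)]
    simp [integral_eval, hν0]
  rw [variance_of_integral_eq_zero (by fun_prop) (by simpa [Finset.sum_fn] using hmean)] at hvar
  rw [variance_of_integral_eq_zero measurable_id.aemeasurable hν0] at hvar
  simpa [Finset.sum_fn] using hvar

end PiMoments

section Blocks

variable {Ω : Type*} [MeasurableSpace Ω] {P : Measure Ω} {ν : Measure ℝ}
  {Y : ℕ × ℕ → Ω → ℝ}

def block (m : ℕ) (Y : ℕ × ℕ → Ω → ℝ) (i : ℕ) (ω : Ω) : Fin m → ℝ := fun j => Y (i, j) ω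

theorem measurable_block (hmeas : ∀ p, Measurable (Y p)) (m i : ℕ) :
    Measurable (block m Y i) :=
  measurable_pi_lambda _ fun _ => hmeas _

theorem map_block (hmeas : ∀ p, Measurable (Y p)) (hindep : iIndepFun Y P)
    (hlaw : ∀ p, P.map (Y p) = ν) (m i : ℕ) :
    P.map (block m Y i) = Measure.pi fun _ => ν := by
  have hinj : Function.Injective fun j : Fin m => (i, (j : ℕ)) := fun j k h =>
    Fin.ext (Prod.ext_iff.1 h).2
  exact ((hindep.precomp hinj).map_fun_eq_pi_map fun j => (hmeas _).aemeasurable).trans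
    (by simp [hlaw])

theorem indepFun_block (hmeas : ∀ p, Measurable (Y p)) (hindep : iIndepFun Y P) (m : ℕ)
    {i k : ℕ} (hik : i ≠ k) :
    IndepFun (block m Y i) (block m Y k) P := by
  have hdisj : Disjoint ({i} ×ˢ range m) ({k} ×ˢ range m) := by
    simp only [disjoint_left, mem_product, mem_singleton]
    rintro ⟨a, b⟩ ⟨rfl, -⟩ ⟨rfl, -⟩
    exact hik rfl
  exact (hindep.indepFun_finset _ _ hdisj hmeas).comp
    (φ := fun y (j : Fin m) => y ⟨(i, j), by simp⟩) (ψ := fun y (j : Fin m) => y ⟨(k, j), by simp⟩)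
    (measurable_pi_lambda _ fun _ => measurable_pi_apply _)
    (measurable_pi_lambda _ fun _ => measurable_pi_apply _)

theorem ae_tendsto_avg_comp_block (hmeas : ∀ p, Measurable (Y p)) (hindep : iIndepFun Y P)
    (hlaw : ∀ p, P.map (Y p) = ν) {m : ℕ} {g : (Fin m → ℝ) → ℝ} (hg : Measurable g)
    (hint : Integrable g (Measure.pi fun _ => ν)) :
    ∀ᵐ ω ∂P, Tendsto (fun n : ℕ => (∑ i ∈ range n, g (block m Y i ω)) / n) atTop
      (𝓝 (∫ y, g y ∂Measure.pi fun _ => ν)) := by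
  have hmap := map_block hmeas hindep hlaw m
  have hint0 : Integrable (fun ω => g (block m Y 0 ω)) P := by
    rw [← hmap 0] at hint
    exact hint.comp_measurable (measurable_block hmeas m 0)
  have hident : ∀ i, IdentDistrib (fun ω => g (block m Y i ω)) (fun ω => g (block m Y 0 ω)) P P :=
    fun i => IdentDistrib.comp ⟨(measurable_block hmeas m i).aemeasurable,
      (measurable_block hmeas m 0).aemeasurable, by rw [hmap, hmap]⟩ hg
  have hlim := strong_law_ae_real (fun i ω => g (block m Y i ω)) hint0
    (fun i k hik => (indepFun_block hmeas hindep m hik).comp hg hg) hident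
  rwa [← integral_map (measurable_block hmeas m 0).aemeasurable
    (hmap 0 ▸ hint.aestronglyMeasurable), hmap 0] at hlim

theorem ae_tendsto_avg_sum_sq (hmeas : ∀ p, Measurable (Y p)) (hindep : iIndepFun Y P)
    (hlaw : ∀ p, P.map (Y p) = ν) [IsProbabilityMeasure ν] (hν : MemLp id 2 ν) (m : ℕ) :
    ∀ᵐ ω ∂P, Tendsto (fun n : ℕ => (∑ i ∈ range n, ∑ j ∈ range m, Y (i, j) ω ^ 2) / n) atTop
      (𝓝 (m * ∫ x, x ^ 2 ∂ν)) := by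
  have hint : Integrable (fun y : Fin m → ℝ => ∑ j, y j ^ 2) (Measure.pi fun _ => ν) :=
    integrable_finsetSum _ fun j _ =>
      integrable_comp_eval (μ := fun _ : Fin m => ν) (f := fun x : ℝ => x ^ 2) hν.integrable_sq
  simpa [block, Finset.sum_range, integral_sum_sq_pi hν] using
    ae_tendsto_avg_comp_block hmeas hindep hlaw (by fun_prop) hint

theorem ae_tendsto_avg_sq_sampleMean (hmeas : ∀ p, Measurable (Y p)) (hindep : iIndepFun Y P)
    (hlaw : ∀ p, P.map (Y p) = ν) [IsProbabilityMeasure ν] (hν : MemLp id 2 ν)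
    (hν0 : ∫ x, x ∂ν = 0) (m : ℕ) :
    ∀ᵐ ω ∂P, Tendsto (fun n : ℕ => (∑ i ∈ range n, sampleMean (fun j => Y (i, j) ω) m ^ 2) / n)
      atTop (𝓝 ((∫ x, x ^ 2 ∂ν) / m)) := by
  have hsum : MemLp (fun y : Fin m → ℝ => ∑ j, y j) 2 (Measure.pi fun _ => ν) := by
    simpa [Finset.sum_fn] using memLp_finsetSum' univ fun j _ =>
      hν.comp_measurePreserving (measurePreserving_eval (fun _ : Fin m => ν) j)
  have hint : Integrable (fun y : Fin m → ℝ => ((∑ j, y j) / m) ^ 2) (Measure.pi fun _ => ν) := by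
    simpa [div_pow] using hsum.integrable_sq.div_const ((m : ℝ) ^ 2)
  have hlim : ∫ y, ((∑ j, y j) / m) ^ 2 ∂(Measure.pi fun _ : Fin m => ν)
      = (∫ x, x ^ 2 ∂ν) / m := by
    rw [show (fun y : Fin m → ℝ => ((∑ j, y j) / m) ^ 2) = fun y => (∑ j, y j) ^ 2 / (m : ℝ) ^ 2 by
      simp [div_pow], integral_div, integral_sq_sum_pi hν hν0]
    rcases eq_or_ne (m : ℝ) 0 with hm | hm
    · simp [hm]
    · field_simp
  simpa [block, sampleMean, Finset.sum_range, hlim] using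
    ae_tendsto_avg_comp_block hmeas hindep hlaw (by fun_prop) hint

end Blocks

theorem sigmaHat_inconsistent_fixed_sample_sizes_general
    {Ω : Type*} [MeasurableSpace Ω] (P : Measure Ω)
    (μ : ℕ → ℝ) (v : ℝ≥0)
    (m : ℕ) (hm : 2 ≤ m)
    -- A1: tree order restriction
    (hA1 : ∀ i, 1 ≤ i → μ 0 ≤ μ i)
    -- A3: independent normal observations, common variance v
    (X : ℕ → ℕ → Ω → ℝ)
    (hmeas : ∀ i j, Measurable (X i j))
    (hindep : iIndepFun (fun p : ℕ × ℕ => X p.1 p.2) P)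
    (hdist : ∀ i j, Measure.map (X i j) P = gaussianReal (μ i) v) :
    ∀ᵐ ω ∂P,
      Tendsto (fun s : ℕ => sigmaHat m m s fun i j => X i j ω)
        atTop (𝓝 (((m : ℝ) - 1) / (m : ℝ) * (v : ℝ))) := by
  have hm0 : m ≠ 0 := by omega
  set Y : ℕ × ℕ → Ω → ℝ := fun p ω => X p.1 p.2 ω - μ p.1
  have hYmeas : ∀ p, Measurable (Y p) := fun p => (hmeas p.1 p.2).sub_const _
  have hYindep : iIndepFun Y P :=
    hindep.comp (fun p x => x - μ p.1) fun _ => measurable_id.sub_const _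
  have hYlaw : ∀ p, P.map (Y p) = gaussianReal 0 v := fun p => by
    rw [show Y p = (· - μ p.1) ∘ X p.1 p.2 from rfl,
      ← Measure.map_map (measurable_sub_const _) (hmeas p.1 p.2), hdist,
      gaussianReal_map_sub_const, sub_self]
  have hsq : ∫ x, x ^ 2 ∂gaussianReal 0 v = v := by
    rw [← variance_of_integral_eq_zero aemeasurable_id' integral_id_gaussianReal]
    exact variance_fun_id_gaussianReal
  filter_upwards [ae_tendsto_avg_sum_sq hYmeas hYindep hYlaw (memLp_id_gaussianReal 2) m,
    ae_tendsto_avg_sq_sampleMean hYmeas hYindep hYlaw (memLp_id_gaussianReal 2)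
      integral_id_gaussianReal m] with ω hW hD
  simp only [Y, sampleMean_sub_const hm0] at hD
  convert tendsto_sigmaHat_of_tendsto_avg hm0 hA1 hW hD using 2
  rw [hsq]
  field_simp

/-- Under A1–A4 with all sample sizes equal to a fixed `m ≥ 2`
(`n₀⁽ˢ⁾ = n⁽ˢ⁾ = m`), `σ̂²_{(s)} → ((m−1)/m) σ²` almost surely; in particular the MLE
of the variance is inconsistent. -/
theorem sigmaHat_inconsistent_fixed_sample_sizes
    {Ω : Type*} [MeasurableSpace Ω] (P : Measure Ω) [IsProbabilityMeasure P]
    (μ : ℕ → ℝ) (v : ℝ≥0) (hv : v ≠ 0)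
    (m : ℕ) (hm : 2 ≤ m)
    -- A1: tree order restriction
    (hA1 : ∀ i, 1 ≤ i → μ 0 ≤ μ i)
    -- A2: uniformly bounded means
    (hA2 : ∃ B > 0, ∀ i, μ i ≤ B)
    -- A3: independent normal observations, common variance v
    (X : ℕ → ℕ → Ω → ℝ)
    (hmeas : ∀ i j, Measurable (X i j))
    (hindep : iIndepFun (fun p : ℕ × ℕ => X p.1 p.2) P)
    (hdist : ∀ i j, Measure.map (X i j) P = gaussianReal (μ i) v) :
    ∀ᵐ ω ∂P,
      Tendsto (fun s : ℕ => sigmaHat m m s fun i j => X i j ω)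
        atTop (𝓝 (((m : ℝ) - 1) / (m : ℝ) * (v : ℝ))) :=
  sigmaHat_inconsistent_fixed_sample_sizes_general P μ v m hm hA1 X hmeas hindep hdist
end
end

section
/- Bounds on the MLE of the control mean: let ρ^{(s)} = s·n^{(s)}/n_0^{(s)} and λ^{(s)} = min_{1≤i≤s} (X̄_i^{(s)} − X̄_0^{(s)}). Then for any real observations, X̄_0^{(s)} + (ρ^{(s)}/(1+ρ^{(s)})) λ^{(s)} 𝟙{λ^{(s)} < 0} ≤ μ̂_0^{(s)} ≤ X̄_0^{(s)}. -/
/-!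
The upper bound is the candidate `I = ∅`. For the lower bound, put `ℓ = min(λ, 0)`; every
`X̄ᵢ` with `i ≥ 1` is at least `X̄₀ + ℓ`, so the weighted mean indexed by `I` is at least
`X̄₀ + (n|I|/(n₀+n|I|)) ℓ`. Since `t ↦ t/(n₀+t)` is increasing, `|I| ≤ s` and `ℓ ≤ 0`, this is
at least `X̄₀ + (sn/(n₀+sn)) ℓ`, and `sn/(n₀+sn) = ρ/(1+ρ)`.
-/

open MeasureTheory ProbabilityTheory Filter Finset BoundedContinuousFunction
open scoped NNReal Topology

noncomputable section


/-- `λ⁽ˢ⁾ = min_{1 ≤ i ≤ s} (X̄ᵢ − X̄₀)` (junk value `0` if `s = 0`). -/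
def lamFun (s : ℕ) (xbar : ℕ → ℝ) : ℝ :=
  if h : (Finset.Icc 1 s).Nonempty then (Finset.Icc 1 s).inf' h fun i => xbar i - xbar 0
  else 0

theorem add_mul_le_weightedMean {ι : Type*} (I : Finset ι) {a b : ℝ} (ha : 0 < a) (hb : 0 ≤ b)
    {x : ι → ℝ} {x₀ ℓ : ℝ} (h : ∀ i ∈ I, x₀ + ℓ ≤ x i) :
    x₀ + b * #I / (a + b * #I) * ℓ ≤ (a * x₀ + ∑ i ∈ I, b * x i) / (a + b * #I) := by
  have hpos : 0 < a + b * #I := by positivity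
  have hsum : b * #I * (x₀ + ℓ) ≤ ∑ i ∈ I, b * x i := by
    calc b * #I * (x₀ + ℓ) = ∑ _i ∈ I, b * (x₀ + ℓ) := by rw [sum_const, nsmul_eq_mul]; ring
      _ ≤ ∑ i ∈ I, b * x i := sum_le_sum fun i hi => mul_le_mul_of_nonneg_left (h i hi) hb
  rw [div_mul_eq_mul_div, add_div' _ _ _ hpos.ne', div_le_div_iff_of_pos_right hpos]
  linarith

theorem div_add_self_le_div_add_self {a t u : ℝ} (ha : 0 < a) (ht : 0 ≤ t) (htu : t ≤ u) :
    t / (a + t) ≤ u / (a + u) := by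
  rw [div_le_div_iff₀ (by linarith) (by linarith)]
  nlinarith

theorem lamFun_le_sub {s : ℕ} {xbar : ℕ → ℝ} {i : ℕ} (hi : i ∈ Icc 1 s) :
    lamFun s xbar ≤ xbar i - xbar 0 := by
  rw [lamFun, dif_pos ⟨i, hi⟩]
  exact inf'_le _ hi

theorem treeMLE0_le (n0 nn s : ℕ) (xbar : ℕ → ℝ) {I : Finset ℕ} (hI : I ⊆ Icc 1 s) :
    treeMLE0 n0 nn s xbar ≤
      ((n0 : ℝ) * xbar 0 + ∑ i ∈ I, (nn : ℝ) * xbar i) / ((n0 : ℝ) + (nn : ℝ) * I.card) :=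
  inf'_le _ (mem_powerset.mpr hI)

theorem le_treeMLE0 {n0 nn s : ℕ} {xbar : ℕ → ℝ} {m : ℝ}
    (h : ∀ I ⊆ Icc 1 s, m ≤ ((n0 : ℝ) * xbar 0 + ∑ i ∈ I, (nn : ℝ) * xbar i)
      / ((n0 : ℝ) + (nn : ℝ) * I.card)) :
    m ≤ treeMLE0 n0 nn s xbar :=
  le_inf' _ _ fun I hI => h I (mem_powerset.mp hI)

theorem treeMLE0_le_self {n0 : ℕ} (h0 : 1 ≤ n0) (nn s : ℕ) (xbar : ℕ → ℝ) :
    treeMLE0 n0 nn s xbar ≤ xbar 0 := by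
  have hn0 : (n0 : ℝ) ≠ 0 := by positivity
  simpa [hn0] using treeMLE0_le n0 nn s xbar (empty_subset _)

theorem treeMLE0_bounds_general
    (n0 nn s : ℕ) (h0 : 1 ≤ n0) (xbar : ℕ → ℝ) :
    xbar 0 + ((s : ℝ) * nn / n0) / (1 + (s : ℝ) * nn / n0) *
        (if lamFun s xbar < 0 then lamFun s xbar else 0)
      ≤ treeMLE0 n0 nn s xbar ∧ treeMLE0 n0 nn s xbar ≤ xbar 0 := by
  refine ⟨le_treeMLE0 fun I hI => ?_, treeMLE0_le_self h0 nn s xbar⟩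
  have hn0 : (0 : ℝ) < n0 := by exact_mod_cast h0
  have hρ : ((s : ℝ) * nn / n0) / (1 + (s : ℝ) * nn / n0) = nn * s / (n0 + nn * s) := by
    field_simp
  have hcard : (#I : ℝ) ≤ s := by
    simpa using (Nat.cast_le (α := ℝ)).mpr (card_le_card hI)
  rw [hρ]
  set ℓ := if lamFun s xbar < 0 then lamFun s xbar else 0
  have hℓ : ℓ ≤ 0 ∧ ℓ ≤ lamFun s xbar := by
    unfold ℓ
    split_ifs <;> constructor <;> linarith
  calc xbar 0 + nn * s / (n0 + nn * s) * ℓ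
      ≤ xbar 0 + nn * #I / (n0 + nn * #I) * ℓ := by
        have hmono := div_add_self_le_div_add_self hn0 (by positivity)
          (by gcongr : (nn : ℝ) * #I ≤ nn * s)
        exact add_le_add_right (mul_le_mul_of_nonpos_right hmono hℓ.1) _
    _ ≤ _ := add_mul_le_weightedMean I hn0 (Nat.cast_nonneg _) fun i hi => by
        linarith [lamFun_le_sub (xbar := xbar) (hI hi), hℓ.2]

/-- Bounds on the MLE of the control mean: with
`ρ⁽ˢ⁾ = s n / n₀` and `λ⁽ˢ⁾ = min_{1 ≤ i ≤ s} (X̄ᵢ − X̄₀)`, for arbitrary real sample means,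
`X̄₀ + (ρ/(1+ρ)) λ 𝟙{λ < 0} ≤ μ̂₀ ≤ X̄₀`. -/
theorem treeMLE0_bounds
    (n0 nn s : ℕ) (h0 : 1 ≤ n0) (hn : 1 ≤ nn) (hs : 1 ≤ s) (xbar : ℕ → ℝ) :
    xbar 0 + ((s : ℝ) * nn / n0) / (1 + (s : ℝ) * nn / n0) *
        (if lamFun s xbar < 0 then lamFun s xbar else 0)
      ≤ treeMLE0 n0 nn s xbar ∧ treeMLE0 n0 nn s xbar ≤ xbar 0 :=
  treeMLE0_bounds_general n0 nn s h0 xbar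
end
end

section
/- Consider two independent normal populations with means μ_0 ≤ μ_1 and common variance σ² > 0, where for each s the sample from population 0 has fixed size n_0 = m and the sample from population 1 has size n_1^{(s)} = m′s (m, m′ ≥ 1 fixed integers). Then as s → ∞, μ̂_0^{(s)} → min(X̄_0, μ_1) almost surely and μ̂_1^{(s)} → μ_1 almost surely. -/
open MeasureTheory ProbabilityTheory Filter Finset BoundedContinuousFunction
open scoped NNReal Topology

noncomputable section


/-!
The treatment sample mean `X̄₁⁽ˢ⁾` is an average of i.i.d. `N(μ₁, σ²)` variables, so by the
strong law of large numbers it converges to `μ₁` almost surely, while the control mean `X̄₀` does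
not move with `s`. For such an `ω` the pooled mean `(m X̄₀ + m's X̄₁⁽ˢ⁾)/(m + m's)` is dominated by
its second term and converges to `μ₁` as well, so `μ̂₀⁽ˢ⁾ → min (X̄₀, μ₁)` and
`μ̂₁⁽ˢ⁾ → max (min (X̄₀, μ₁), μ₁) = μ₁`.
-/

lemma tendsto_add_mul_div_add_of_tendsto_atTop {α : Type*} {l : Filter α} {a b : α → ℝ}
    {β : ℝ} (k d : ℝ) (ha : Tendsto a l atTop) (hb : Tendsto b l (𝓝 β)) :
    Tendsto (fun i => (k + a i * b i) / (d + a i)) l (𝓝 β) := by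
  have hden : Tendsto (fun i => d + a i) l atTop := tendsto_atTop_add_const_left l d ha
  have hcorr : Tendsto (fun i => (k - d * b i) / (d + a i)) l (𝓝 0) :=
    (tendsto_const_nhds.sub (hb.const_mul d)).div_atTop hden
  have heq : (fun i => b i + (k - d * b i) / (d + a i)) =ᶠ[l]
      fun i => (k + a i * b i) / (d + a i) := by
    filter_upwards [hden.eventually_gt_atTop 0] with i hi
    field_simp
    ring
  simpa using (hb.add hcorr).congr' heq

section TwoMLE

variable {α : Type*} {l : Filter α} {ms : α → ℕ} {xb1 : α → ℝ} {μ1 : ℝ}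

lemma tendsto_twoMLE0_s13 (m : ℕ) (xb0 : ℝ) (hms : Tendsto ms l atTop)
    (hxb1 : Tendsto xb1 l (𝓝 μ1)) :
    Tendsto (fun i => twoMLE0 m (ms i) xb0 (xb1 i)) l (𝓝 (min xb0 μ1)) := by
  have hpooled := tendsto_add_mul_div_add_of_tendsto_atTop ((m : ℝ) * xb0) m
    (tendsto_natCast_atTop_atTop.comp hms) hxb1
  simpa only [twoMLE0, Nat.cast_add, Function.comp_apply] using tendsto_const_nhds.min hpooled

lemma tendsto_twoMLE1_s13 (m : ℕ) (xb0 : ℝ) (hms : Tendsto ms l atTop)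
    (hxb1 : Tendsto xb1 l (𝓝 μ1)) :
    Tendsto (fun i => twoMLE1 m (ms i) xb0 (xb1 i)) l (𝓝 μ1) := by
  simpa only [twoMLE1, max_eq_right (min_le_right xb0 μ1)] using
    (tendsto_twoMLE0_s13 m xb0 hms hxb1).max hxb1

end TwoMLE

lemma ae_tendsto_sampleMean_of_gaussianReal {Ω : Type*} [MeasurableSpace Ω] {P : Measure Ω}
    {μ : ℝ} {v : ℝ≥0} {X : ℕ → Ω → ℝ} (hmeas : ∀ j, Measurable (X j))
    (hindep : Pairwise (Function.onFun (· ⟂ᵢ[P] ·) X))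
    (hdist : ∀ j, P.map (X j) = gaussianReal μ v) :
    ∀ᵐ ω ∂P, Tendsto (sampleMean fun j => X j ω) atTop (𝓝 μ) := by
  have hint : Integrable (X 0) P :=
    (hdist 0 ▸ memLp_one_iff_integrable.mp (memLp_id_gaussianReal 1)).comp_aemeasurable
      (hmeas 0).aemeasurable
  have hmean : P[X 0] = μ := by
    rw [← integral_map (f := fun x => x) (hmeas 0).aemeasurable aestronglyMeasurable_id,
      hdist 0, integral_id_gaussianReal]
  have hident (j : ℕ) : IdentDistrib (X j) (X 0) P P :=
    ⟨(hmeas j).aemeasurable, (hmeas 0).aemeasurable, by rw [hdist j, hdist 0]⟩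
  exact hmean ▸ strong_law_ae_real X hint hindep hident

theorem mean_mle_limits_two_populations_general
    {Ω : Type*} [MeasurableSpace Ω] (P : Measure Ω)
    (μ1 : ℝ) (v : ℝ≥0)
    (m m' : ℕ) (hm' : 1 ≤ m')
    (X0 X1 : ℕ → Ω → ℝ)
    (hmeas1 : ∀ j, Measurable (X1 j))
    (hindep : iIndepFun (Sum.elim X0 X1) P)
    (hdist1 : ∀ j, Measure.map (X1 j) P = gaussianReal μ1 v) :
    ∀ᵐ ω ∂P,
      Tendsto (fun s : ℕ =>
          twoMLE0 m (m' * s) (sampleMean (fun j => X0 j ω) m)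
            (sampleMean (fun j => X1 j ω) (m' * s)))
        atTop (𝓝 (min (sampleMean (fun j => X0 j ω) m) μ1)) ∧
      Tendsto (fun s : ℕ =>
          twoMLE1 m (m' * s) (sampleMean (fun j => X0 j ω) m)
            (sampleMean (fun j => X1 j ω) (m' * s)))
        atTop (𝓝 μ1) := by
  have hpair : Pairwise (Function.onFun (· ⟂ᵢ[P] ·) X1) := fun i j hij =>
    hindep.indepFun (Sum.inr_injective.ne hij)
  have hms : Tendsto (fun s : ℕ => m' * s) atTop atTop :=
    tendsto_id.const_mul_atTop' hm'
  filter_upwards [ae_tendsto_sampleMean_of_gaussianReal hmeas1 hpair hdist1] with ω hω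
  exact ⟨tendsto_twoMLE0_s13 m _ hms (hω.comp hms), tendsto_twoMLE1_s13 m _ hms (hω.comp hms)⟩

/-- Two independent normal populations with tree-ordered means
`μ0 ≤ μ1` and common variance `v > 0`; control sample of fixed size `m`, treatment sample
of size `m' * s`.  Then almost surely `μ̂₀⁽ˢ⁾ → min (X̄₀, μ1)` and `μ̂₁⁽ˢ⁾ → μ1` as `s → ∞`. -/
theorem mean_mle_limits_two_populations
    {Ω : Type*} [MeasurableSpace Ω] (P : Measure Ω) [IsProbabilityMeasure P]
    (μ0 μ1 : ℝ) (hμ : μ0 ≤ μ1) (v : ℝ≥0) (hv : v ≠ 0)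
    (m m' : ℕ) (hm : 1 ≤ m) (hm' : 1 ≤ m')
    (X0 X1 : ℕ → Ω → ℝ)
    (hmeas0 : ∀ j, Measurable (X0 j)) (hmeas1 : ∀ j, Measurable (X1 j))
    (hindep : iIndepFun (Sum.elim X0 X1) P)
    (hdist0 : ∀ j, Measure.map (X0 j) P = gaussianReal μ0 v)
    (hdist1 : ∀ j, Measure.map (X1 j) P = gaussianReal μ1 v) :
    ∀ᵐ ω ∂P,
      Tendsto (fun s : ℕ =>
          twoMLE0 m (m' * s) (sampleMean (fun j => X0 j ω) m)
            (sampleMean (fun j => X1 j ω) (m' * s)))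
        atTop (𝓝 (min (sampleMean (fun j => X0 j ω) m) μ1)) ∧
      Tendsto (fun s : ℕ =>
          twoMLE1 m (m' * s) (sampleMean (fun j => X0 j ω) m)
            (sampleMean (fun j => X1 j ω) (m' * s)))
        atTop (𝓝 μ1) :=
  mean_mle_limits_two_populations_general P μ1 v m m' hm' X0 X1 hmeas1 hindep hdist1
end
end
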